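/- Let X ∈ ℝ^{n×d} have smallest singular value α > 0 (full column rank), y ∈ ℝⁿ, and for λ > 0 let w(λ) = argmin_w (1/2)‖Xw − y‖₂² + λ‖w‖₁. Then for any 0 < λ₁ ≤ λ₂, ‖w(λ₂) − w(λ₁)‖₂ ≤ (√d/α²)·(λ₂ − λ₁). -/

import Mathlib

/-!
Each Lasso objective is α²-strongly convex, so its minimizer beats every other point by a
quadratic margin: `f_λ (w λ) + α²/2 ‖v - w λ‖² ≤ f_λ v`. Adding this inequality for `λ₁` at
`v = w λ₂` and for `λ₂` at `v = w λ₁`, the least-squares terms cancel and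
`α² ‖w λ₂ - w λ₁‖² ≤ (λ₂ - λ₁) (‖w λ₁‖₁ - ‖w λ₂‖₁) ≤ (λ₂ - λ₁) √d ‖w λ₂ - w λ₁‖`,
the last step because `‖·‖₁` is `√d`-Lipschitz for the Euclidean norm.
-/

noncomputable def euclNorm {d : ℕ} (v : Fin d → ℝ) : ℝ := Real.sqrt (∑ i, v i ^ 2)

/-- The Lasso objective (1/2)‖Xw − y‖₂² + λ‖w‖₁. -/
noncomputable def lassoObj {n d : ℕ} (X : Matrix (Fin n) (Fin d) ℝ) (y : Fin n → ℝ)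
    (l : ℝ) (w : Fin d → ℝ) : ℝ :=
  (1 / 2) * euclNorm (X.mulVec w - y) ^ 2 + l * ∑ i, |w i|

open Set Filter Topology

section StrongConvexity

variable {E F : Type*} [NormedAddCommGroup E] [NormedSpace ℝ E]

theorem StrongConvexOn.add_mul_sq_norm_sub_le_of_isMinOn {s : Set E} {m : ℝ} {f : E → ℝ}
    {u v : E} (hf : StrongConvexOn s m f) (hu : u ∈ s) (hv : v ∈ s) (hmin : IsMinOn f s u) :
    f u + m / 2 * ‖v - u‖ ^ 2 ≤ f v := by
  set c := m / 2 * ‖v - u‖ ^ 2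
  -- compare `u` with the points `t • v + (1 - t) • u` of the segment, then let `t → 0`
  have key : ∀ t ∈ Ioo (0 : ℝ) 1, f u + (1 - t) * c ≤ f v := by
    rintro t ⟨ht₀, ht₁⟩
    have hconv := hf.2 hv hu ht₀.le (sub_nonneg.2 ht₁.le) (add_sub_cancel t 1)
    have hle : f u ≤ _ := hmin (hf.1 hv hu ht₀.le (sub_nonneg.2 ht₁.le) (add_sub_cancel t 1))
    simp only [smul_eq_mul] at hconv
    have : t * (f u + (1 - t) * c) ≤ t * f v := by linear_combination hle + hconv
    exact le_of_mul_le_mul_left this ht₀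
  have hlim : Tendsto (fun t => f u + (1 - t) * c) (𝓝[Ioo 0 1] 0) (𝓝 (f u + c)) := by
    have : Continuous (fun t : ℝ => f u + (1 - t) * c) := by fun_prop
    simpa using (this.tendsto 0).mono_left nhdsWithin_le_nhds
  have : (𝓝[Ioo (0 : ℝ) 1] 0).NeBot := left_nhdsWithin_Ioo_neBot zero_lt_one
  exact le_of_tendsto hlim (eventually_nhdsWithin_of_forall key)

theorem StrongConvexOn.comp_linearMap_sub [NormedAddCommGroup F] [NormedSpace ℝ F]
    {m α : ℝ} {f : F → ℝ} (hf : StrongConvexOn univ m f) (hm : 0 ≤ m) (hα : 0 ≤ α)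
    (A : E →ₗ[ℝ] F) (hA : ∀ v, α * ‖v‖ ≤ ‖A v‖) (y : F) :
    StrongConvexOn univ (α ^ 2 * m) fun x => f (A x - y) := by
  refine ⟨convex_univ, fun x _ x' _ a b ha hb hab => ?_⟩
  have hcomb : A (a • x + b • x') - y = a • (A x - y) + b • (A x' - y) := by
    obtain rfl := eq_sub_of_add_eq' hab
    simp only [map_add, map_smul]
    module
  have hgrowth : α ^ 2 * m / 2 * ‖x - x'‖ ^ 2 ≤ m / 2 * ‖(A x - y) - (A x' - y)‖ ^ 2 := by
    rw [sub_sub_sub_cancel_right, ← map_sub]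
    calc α ^ 2 * m / 2 * ‖x - x'‖ ^ 2 = m / 2 * (α * ‖x - x'‖) ^ 2 := by ring
      _ ≤ m / 2 * ‖A (x - x')‖ ^ 2 := by gcongr; exact hA _
  dsimp only
  rw [hcomb]
  refine (hf.2 trivial trivial ha hb hab).trans ?_
  gcongr

theorem strongConvexOn_univ_half_sq_norm [NormedAddCommGroup F] [InnerProductSpace ℝ F] :
    StrongConvexOn univ 1 fun z : F => 1 / 2 * ‖z‖ ^ 2 := by
  rw [strongConvexOn_iff_convex]
  simpa using convexOn_const (0 : ℝ) convex_univ

theorem norm_sub_le_of_isMinOn_of_sub_eq_mul {F₁ F₂ h : E → ℝ} {m l₁ l₂ : ℝ} {K : NNReal}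
    {a b : E} (hm : 0 < m) (hl : l₁ ≤ l₂) (hh : LipschitzWith K h)
    (hsub : ∀ x, F₂ x - F₁ x = (l₂ - l₁) * h x)
    (hF₁ : StrongConvexOn univ m F₁) (hF₂ : StrongConvexOn univ m F₂)
    (ha : IsMinOn F₁ univ a) (hb : IsMinOn F₂ univ b) :
    ‖b - a‖ ≤ K / m * (l₂ - l₁) := by
  have growth₁ := hF₁.add_mul_sq_norm_sub_le_of_isMinOn trivial trivial (v := b) ha
  have growth₂ := hF₂.add_mul_sq_norm_sub_le_of_isMinOn trivial trivial (v := a) hb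
  rw [norm_sub_rev] at growth₂
  have hlip : h a - h b ≤ K * ‖b - a‖ := by
    rw [← dist_eq_norm, dist_comm]
    exact (le_abs_self _).trans (hh.dist_le_mul a b)
  have hsq : m * ‖b - a‖ ^ 2 ≤ (l₂ - l₁) * (K * ‖b - a‖) :=
    calc m * ‖b - a‖ ^ 2 ≤ (l₂ - l₁) * (h a - h b) := by linarith [hsub a, hsub b]
      _ ≤ (l₂ - l₁) * (K * ‖b - a‖) := by gcongr
  rw [div_mul_eq_mul_div, le_div_iff₀ hm]
  rcases (norm_nonneg (b - a)).eq_or_lt with hzero | hpos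
  · rw [← hzero, zero_mul]
    exact mul_nonneg K.2 (sub_nonneg.2 hl)
  · nlinarith

end StrongConvexity

section EuclideanSpace

variable {ι : Type*} [Fintype ι]

theorem EuclideanSpace.sum_abs_le_sqrt_card_mul_norm (x : EuclideanSpace ℝ ι) :
    ∑ i, |x i| ≤ √(Fintype.card ι) * ‖x‖ := by
  rw [EuclideanSpace.norm_eq, ← Real.sqrt_mul (Nat.cast_nonneg _)]
  apply Real.le_sqrt_of_sq_le
  simpa [sq_abs] using sq_sum_le_card_mul_sum_sq (s := Finset.univ) (f := fun i => |x i|)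

theorem EuclideanSpace.lipschitzWith_sum_abs :
    LipschitzWith (NNReal.sqrt (Fintype.card ι)) fun x : EuclideanSpace ℝ ι => ∑ i, |x i| := by
  refine LipschitzWith.of_le_add_mul _ fun x y => ?_
  calc ∑ i, |x i| ≤ ∑ i, (|y i| + |(x - y) i|) := by
        gcongr with i
        rw [PiLp.sub_apply]
        exact sub_le_iff_le_add'.1 (abs_sub_abs_le_abs_sub _ _)
    _ ≤ _ := by
        rw [Finset.sum_add_distrib, dist_eq_norm, Real.coe_sqrt, NNReal.coe_natCast]
        gcongr
        exact EuclideanSpace.sum_abs_le_sqrt_card_mul_norm _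

theorem EuclideanSpace.convexOn_sum_abs :
    ConvexOn ℝ univ fun x : EuclideanSpace ℝ ι => ∑ i, |x i| := by
  refine ⟨convex_univ, fun x _ y _ a b ha hb _ => ?_⟩
  simp only [smul_eq_mul, Finset.mul_sum, ← Finset.sum_add_distrib, PiLp.add_apply,
    PiLp.smul_apply]
  gcongr with i
  calc |a * x i + b * y i| ≤ |a * x i| + |b * y i| := abs_add_le _ _
    _ = a * |x i| + b * |y i| := by rw [abs_mul, abs_mul, abs_of_nonneg ha, abs_of_nonneg hb]

end EuclideanSpace

section Lasso

variable {n d : ℕ} (X : Matrix (Fin n) (Fin d) ℝ) (y : Fin n → ℝ)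

theorem euclNorm_eq_norm (v : Fin d → ℝ) : euclNorm v = ‖WithLp.toLp 2 v‖ := by
  simp [euclNorm, EuclideanSpace.norm_eq]

theorem lassoObj_ofLp (l : ℝ) (x : EuclideanSpace ℝ (Fin d)) :
    lassoObj X y l x.ofLp =
      1 / 2 * ‖Matrix.toEuclideanLin X x - WithLp.toLp 2 y‖ ^ 2 + l * ∑ i, |x i| := by
  rw [lassoObj, euclNorm_eq_norm, Matrix.toLpLin_apply, WithLp.toLp_sub]

theorem strongConvexOn_lassoObj {α l : ℝ} (hα : 0 ≤ α) (hl : 0 ≤ l)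
    (hX : ∀ v, α * ‖v‖ ≤ ‖Matrix.toEuclideanLin X v‖) :
    StrongConvexOn univ (α ^ 2) fun x : EuclideanSpace ℝ (Fin d) => lassoObj X y l x.ofLp := by
  have hquad := strongConvexOn_univ_half_sq_norm.comp_linearMap_sub zero_le_one hα
    (Matrix.toEuclideanLin X) hX (WithLp.toLp 2 y)
  have hsum := hquad.add (uniformConvexOn_zero.2 (EuclideanSpace.convexOn_sum_abs.smul hl))
  rw [mul_one, add_zero] at hsum
  simp only [lassoObj_ofLp]
  exact hsum

end Lasso

/-- Lipschitzness of the Lasso path with constant √d/α². -/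
theorem stmt_3 {n d : ℕ} (X : Matrix (Fin n) (Fin d) ℝ) (y : Fin n → ℝ) (α : ℝ)
    (hα : 0 < α) (hmin : ∀ v : Fin d → ℝ, α * euclNorm v ≤ euclNorm (X.mulVec v))
    (w : ℝ → (Fin d → ℝ))
    (hw : ∀ l : ℝ, 0 < l → ∀ v : Fin d → ℝ, lassoObj X y l (w l) ≤ lassoObj X y l v)
    (l₁ l₂ : ℝ) (hl₁ : 0 < l₁) (hl₁₂ : l₁ ≤ l₂) :
    euclNorm (w l₂ - w l₁) ≤ Real.sqrt d / α ^ 2 * (l₂ - l₁) := by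
  have hX (v : EuclideanSpace ℝ (Fin d)) : α * ‖v‖ ≤ ‖Matrix.toEuclideanLin X v‖ := by
    simpa [euclNorm_eq_norm, Matrix.toLpLin_apply] using hmin v.ofLp
  have hminOn (l : ℝ) (hl : 0 < l) :
      IsMinOn (fun x => lassoObj X y l x.ofLp) univ (WithLp.toLp 2 (w l)) :=
    isMinOn_univ_iff.2 fun x => hw l hl x.ofLp
  have hl₂ : 0 < l₂ := hl₁.trans_le hl₁₂
  have hpath := norm_sub_le_of_isMinOn_of_sub_eq_mul (pow_pos hα 2) hl₁₂
    EuclideanSpace.lipschitzWith_sum_abs (fun x => by simp only [lassoObj]; ring)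
    (strongConvexOn_lassoObj X y hα.le hl₁.le hX) (strongConvexOn_lassoObj X y hα.le hl₂.le hX)
    (hminOn l₁ hl₁) (hminOn l₂ hl₂)
  rw [euclNorm_eq_norm, WithLp.toLp_sub]
  rwa [Real.coe_sqrt, NNReal.coe_natCast, Fintype.card_fin] at hpath
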